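/- Define, for each vertex v, the sets P_0(v) = {v} and, for 1 ≤ i ≤ k, P_i(v) = P_{i−1}(v) ∪ ⋃_{(u,v) ∈ E_i} P_{i−1}(u). Then for every i with 0 ≤ i ≤ k and every vertex v, P_i(v) = {v} ∪ {u ∈ V : there is a strict journey from u to v using only time indices ≤ i}. In particular, P_k(v) = {v} ∪ {u : there is a strict journey from u to v}, so this iteration computes exactly the strict transitive closure of the evolving graph. -/

import Mathlib

/-!
An evolving graph on a finite vertex set `V` is given by edge sets
`E i ⊆ V × V` for time steps `i ∈ {1, ..., k}`.  A strict journey from `u`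
to `v` using only time indices `≤ i` is a directed walk with at least one
edge, whose edges carry strictly increasing time indices in `{1, ..., i}`.
We encode a walk with `p + 1 ≥ 1` edges by its vertex sequence
`w : Fin (p + 2) → V`.
-/

variable {V : Type*}

/-- There is a strict journey from `u` to `v` using only time indices `≤ i`. -/
def StrictJourneyLE (E : ℕ → Finset (V × V)) (i : ℕ) (u v : V) : Prop :=
  ∃ (p : ℕ) (w : Fin (p + 2) → V) (t : Fin (p + 1) → ℕ),
    StrictMono t ∧ (∀ j, 1 ≤ t j ∧ t j ≤ i) ∧
    w 0 = u ∧ w (Fin.last (p + 1)) = v ∧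
    ∀ j : Fin (p + 1), (w j.castSucc, w j.succ) ∈ E (t j)

/-- The predecessor sets of the algorithm: `P 0 v = {v}` and
`P (i+1) v = P i v ∪ ⋃_{(u,v) ∈ E (i+1)} P i u`. -/
def P [DecidableEq V] (E : ℕ → Finset (V × V)) : ℕ → V → Finset V
  | 0, v => {v}
  | i + 1, v =>
      P E i v ∪ ((E (i + 1)).filter (fun e => e.2 = v)).biUnion (fun e => P E i e.1)

/-!
Allowing the empty journey, "`u = v` or a strict journey from `u` to `v` with times `≤ i + 1`"
holds iff it already holds with times `≤ i`, or some edge `(u', v) ∈ E (i + 1)` is preceded by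
such a journey from `u` to `u'`: the edge at time `i + 1`, if used, must be the last one. This is
exactly the recursion defining `P`.
-/

open Finset

theorem Fin.strictMono_snoc {α : Type*} [Preorder α] {n : ℕ} {t : Fin n → α} {a : α}
    (ht : StrictMono t) (ha : ∀ l, t l < a) : StrictMono (Fin.snoc t a : Fin (n + 1) → α) := by
  cases n with
  | zero => exact Fin.strictMono_iff_lt_succ.2 fun l => l.elim0
  | succ n =>
    refine Fin.strictMono_iff_lt_succ.2 fun l => ?_
    induction l using Fin.lastCases with
    | last => simpa using ha (Fin.last _)
    | cast l =>
      simp only [Fin.succ_castSucc, Fin.snoc_castSucc]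
      exact ht Fin.castSucc_lt_succ

section StrictJourney

variable {E : ℕ → Finset (V × V)} {i j : ℕ} {u u' v : V}

theorem not_strictJourneyLE_zero (E : ℕ → Finset (V × V)) (u v : V) :
    ¬ StrictJourneyLE E 0 u v := by
  rintro ⟨p, w, t, -, ht, -⟩
  have := ht 0
  omega

theorem StrictJourneyLE.mono (hij : i ≤ j) (h : StrictJourneyLE E i u v) :
    StrictJourneyLE E j u v := by
  obtain ⟨p, w, t, hmono, ht, hw⟩ := h
  exact ⟨p, w, t, hmono, fun l => ⟨(ht l).1, (ht l).2.trans hij⟩, hw⟩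

theorem strictJourneyLE_of_mem (hj : 1 ≤ j) (h : (u, v) ∈ E j) : StrictJourneyLE E j u v :=
  ⟨0, ![u, v], fun _ => j, Fin.strictMono_iff_lt_succ.2 fun l => l.elim0, fun _ => ⟨hj, le_rfl⟩,
    rfl, rfl, fun l => by fin_cases l; exact h⟩

theorem StrictJourneyLE.snoc (h : StrictJourneyLE E i u u') (hij : i < j) (he : (u', v) ∈ E j) :
    StrictJourneyLE E j u v := by
  obtain ⟨p, w, t, hmono, ht, rfl, rfl, hw⟩ := h
  refine ⟨p + 1, Fin.snoc w v, Fin.snoc t j,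
    Fin.strictMono_snoc hmono fun l => (ht l).2.trans_lt hij, fun l => ?_, rfl, by simp, fun l => ?_⟩
  · induction l using Fin.lastCases with
    | last => simpa using Nat.one_le_of_lt hij
    | cast l => simpa using ⟨(ht l).1, (ht l).2.trans hij.le⟩
  · induction l using Fin.lastCases with
    | last =>
      simpa only [Fin.succ_castSucc, Fin.succ_last, Fin.snoc_castSucc, Fin.snoc_last] using he
    | cast l => simpa only [Fin.succ_castSucc, Fin.snoc_castSucc] using hw l

theorem StrictJourneyLE.or_exists_last_edge (h : StrictJourneyLE E (i + 1) u v) :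
    StrictJourneyLE E i u v ∨ ∃ u', (u', v) ∈ E (i + 1) ∧ (u = u' ∨ StrictJourneyLE E i u u') := by
  obtain ⟨p, w, t, hmono, ht, rfl, rfl, hw⟩ := h
  rcases (ht (Fin.last p)).2.lt_or_eq with hlt | heq
  · exact .inl ⟨p, w, t, hmono, fun l => ⟨(ht l).1,
      Nat.le_of_lt_succ ((hmono.monotone (Fin.le_last l)).trans_lt hlt)⟩, rfl, rfl, hw⟩
  refine .inr ⟨w (Fin.last p).castSucc, by simpa [heq] using hw (Fin.last p), ?_⟩
  cases p with
  | zero => exact .inl rfl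
  | succ q =>
    refine .inr ⟨q, Fin.init w, Fin.init t, hmono.comp Fin.strictMono_castSucc,
      fun l => ⟨(ht _).1, ?_⟩, rfl, rfl, fun l => hw l.castSucc⟩
    have := hmono (Fin.castSucc_lt_last l)
    simp only [Fin.init]
    omega

theorem strictJourneyLE_succ_iff :
    (u = v ∨ StrictJourneyLE E (i + 1) u v) ↔
      (u = v ∨ StrictJourneyLE E i u v) ∨
        ∃ u', (u', v) ∈ E (i + 1) ∧ (u = u' ∨ StrictJourneyLE E i u u') := by
  constructor
  · rintro (rfl | h)
    · exact .inl (.inl rfl)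
    · exact h.or_exists_last_edge.imp .inr id
  · rintro ((rfl | h) | ⟨u', he, rfl | h⟩)
    · exact .inl rfl
    · exact .inr (h.mono i.le_succ)
    · exact .inr (strictJourneyLE_of_mem i.succ_pos he)
    · exact .inr (h.snoc i.lt_succ_self he)

end StrictJourney

theorem mem_P_iff [DecidableEq V] {E : ℕ → Finset (V × V)} {i : ℕ} {u v : V} :
    u ∈ P E i v ↔ u = v ∨ StrictJourneyLE E i u v := by
  induction i generalizing v with
  | zero => simp [P, not_strictJourneyLE_zero]
  | succ i ih =>
    simp only [strictJourneyLE_succ_iff, P, mem_union, ih, mem_biUnion, mem_filter, Prod.exists,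
      exists_and_right, exists_eq_right]

theorem P_eq_strict_predecessors [DecidableEq V]
    (k : ℕ) (E : ℕ → Finset (V × V)) :
    ∀ i ≤ k, ∀ v : V,
      (↑(P E i v) : Set V) = {v} ∪ {u : V | StrictJourneyLE E i u v} := by
  intro i _ v
  ext u
  exact mem_P_iff
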